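/- The sum over y modulo 12 of (12/y) · e(yℓ/12) equals √12 · (12/ℓ) for every integer ℓ, where (12/·) is the Kronecker symbol and e(x) = exp(2πix). -/
import Mathlib


open Complex Finset

noncomputable def e (x : ℝ) : ℂ := Complex.exp (2 * Real.pi * Complex.I * x)

def kron12 (k : ℤ) : ℤ :=
  if k % 12 = 1 ∨ k % 12 = 11 then 1
  else if k % 12 = 5 ∨ k % 12 = 7 then -1 else 0

lemma e_add_int (x : ℝ) (n : ℤ) : e (x + n) = e x := by
  unfold e
  push_cast
  rw [mul_add, Complex.exp_add]
  rw [show 2 * (Real.pi:ℂ) * Complex.I * (n:ℂ) = (n:ℤ) * (2 * (Real.pi:ℂ) * Complex.I) by ring]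
  rw [Complex.exp_int_mul_two_pi_mul_I]
  ring

lemma e_nat_div (k : ℕ) : e ((k : ℝ) / 12) = (e (1/12)) ^ k := by
  unfold e
  rw [← Complex.exp_nat_mul]
  congr 1
  push_cast
  ring

theorem stmt_1 (ℓ : ℤ) :
    ∑ y ∈ Finset.range 12, (kron12 (y : ℤ) : ℂ) * e ((y : ℝ) * (ℓ : ℝ) / 12) =
      (Real.sqrt 12 : ℂ) * (kron12 ℓ : ℂ) := by
  set ζ : ℂ := e (1/12) with hζdef
  set s : ℂ := ((Real.sqrt 3 : ℝ) : ℂ) with hsdef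
  have hs : s ^ 2 = 3 := by
    rw [hsdef]
    norm_cast
    rw [Real.sq_sqrt] <;> norm_num
  have hζ : ζ = (s + Complex.I) / 2 := by
    rw [hζdef]
    unfold e
    rw [show 2 * (Real.pi:ℂ) * Complex.I * ((1/12 : ℝ) : ℂ) = ((Real.pi/6 : ℝ) : ℂ) * Complex.I by
      push_cast; ring]
    rw [Complex.exp_mul_I, ← Complex.ofReal_cos, ← Complex.ofReal_sin,
      Real.cos_pi_div_six, Real.sin_pi_div_six]
    rw [hsdef]
    push_cast
    ring
  have h2 : ζ ^ 2 = (1 + s * Complex.I) / 2 := by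
    rw [hζ]; linear_combination hs / 4 + Complex.I_sq / 4
  have h4 : ζ ^ 4 = (-1 + s * Complex.I) / 2 := by
    have h : ζ ^ 4 = (ζ ^ 2) ^ 2 := by ring
    rw [h, h2]
    linear_combination (Complex.I ^ 2 / 4) * hs + (3 / 4) * Complex.I_sq
  have h6 : ζ ^ 6 = -1 := by
    have h : ζ ^ 6 = ζ ^ 2 * ζ ^ 4 := by ring
    rw [h, h2, h4]
    linear_combination (Complex.I ^ 2 / 4) * hs + (3 / 4) * Complex.I_sq
  have h5 : ζ ^ 5 = (-s + Complex.I) / 2 := by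
    have h : ζ ^ 5 = ζ * ζ ^ 4 := by ring
    rw [h, h4, hζ]
    linear_combination (Complex.I / 4) * hs + (s / 4) * Complex.I_sq
  have key1 : ζ - ζ ^ 5 - ζ ^ 7 + ζ ^ 11 = 2 * s := by
    linear_combination (ζ ^ 5 - ζ) * h6 + 2 * hζ - 2 * h5
  have hsqrt12 : ((Real.sqrt 12 : ℝ) : ℂ) = 2 * s := by
    rw [show (12:ℝ) = 2 ^ 2 * 3 by norm_num, Real.sqrt_mul (by positivity),
      Real.sqrt_sq (by norm_num)]
    push_cast [hsdef]
    ring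
  obtain ⟨q, r, hr12, hl⟩ : ∃ (q : ℤ) (r : ℕ), r < 12 ∧ ℓ = 12 * q + r := by
    refine ⟨ℓ / 12, (ℓ % 12).toNat, ?_, ?_⟩ <;> omega
  have hk : kron12 ℓ = kron12 r := by
    unfold kron12
    rw [show ℓ % 12 = (r : ℤ) % 12 by omega]
  have hy : ∀ y : ℕ, e ((y : ℝ) * (ℓ : ℝ) / 12) = ζ ^ ((y * r) % 12) := by
    intro y
    have hmod : ((y * r) % 12 : ℕ) + 12 * ((y * r) / 12) = y * r := Nat.mod_add_div _ _
    have hmodR : ((((y * r) % 12 : ℕ)) : ℝ) + 12 * ((((y * r) / 12 : ℕ)) : ℝ) = (y : ℝ) * (r : ℝ) := by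
      exact_mod_cast hmod
    have hlR : (ℓ : ℝ) = 12 * (q : ℝ) + (r : ℝ) := by exact_mod_cast hl
    have hR : (y : ℝ) * (ℓ : ℝ) / 12 = (((y * r) % 12 : ℕ) : ℝ) / 12
        + (((y : ℤ) * q + ((y * r) / 12 : ℕ) : ℤ) : ℝ) := by
      have hdiv : (((y : ℤ) * (r : ℤ) / 12 : ℤ) : ℝ) = (((y * r) / 12 : ℕ) : ℝ) := by
        norm_cast
      push_cast
      rw [hlR]
      linear_combination (-1/12 : ℝ) * hmodR - hdiv
    rw [hR, e_add_int, e_nat_div]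
  clear_value ζ s
  rw [hk]
  rw [Finset.sum_congr rfl (fun y _ => by rw [hy y]), hsqrt12]
  interval_cases r <;>
    norm_num [Finset.sum_range_succ, kron12]
  all_goals
    first
    | ring1
    | linear_combination key1
    | linear_combination -key1
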